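/- Let 𝖧 be a complex Hilbert space and let G₁ = (S₁, L₁, H₁), G₂ = (S₂, L₂, H₂), G₃ = (S₃, L₃, H₃) be three n-channel system triples such that S₃ is an isometry (S₃†S₃ = I). Then the series product is associative: (G₃ ◁ G₂) ◁ G₁ = G₃ ◁ (G₂ ◁ G₁), componentwise in the scattering matrix, the coupling vector, and the Hamiltonian. -/

import Mathlib

noncomputable section

open Matrix

variable {E : Type*} [NormedAddCommGroup E] [InnerProductSpace ℂ E] [CompleteSpace E]

/-- `L₂† S L₁ = Σ_{j,k} (L₂ j)* (S j k) (L₁ k)`. -/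
def quadForm {n : ℕ} (L₂ : Fin n → (E →L[ℂ] E)) (S : Matrix (Fin n) (Fin n) (E →L[ℂ] E))
    (L₁ : Fin n → (E →L[ℂ] E)) : E →L[ℂ] E :=
  ∑ j, ∑ k, star (L₂ j) * S j k * L₁ k

/-- Scattering-matrix component of the series product `G₂ ◁ G₁`. -/
def seriesS {n : ℕ} (S₂ S₁ : Matrix (Fin n) (Fin n) (E →L[ℂ] E)) :
    Matrix (Fin n) (Fin n) (E →L[ℂ] E) := S₂ * S₁

/-- Coupling-vector component of the series product `G₂ ◁ G₁`: `L₂ + S₂ L₁`. -/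
def seriesL {n : ℕ} (S₂ : Matrix (Fin n) (Fin n) (E →L[ℂ] E))
    (L₂ L₁ : Fin n → (E →L[ℂ] E)) : Fin n → (E →L[ℂ] E) :=
  fun j => L₂ j + S₂.mulVec L₁ j

/-- Hamiltonian component of the series product `G₂ ◁ G₁`:
`H₁ + H₂ + (1/(2i))(L₂†S₂L₁ − L₁†S₂†L₂)`. -/
def seriesH {n : ℕ} (S₂ : Matrix (Fin n) (Fin n) (E →L[ℂ] E))
    (L₂ L₁ : Fin n → (E →L[ℂ] E)) (H₁ H₂ : E →L[ℂ] E) : E →L[ℂ] E :=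
  H₁ + H₂ + ((2 * Complex.I)⁻¹) • (quadForm L₂ S₂ L₁ - star (quadForm L₂ S₂ L₁))

/-- `Im X = (X − X†)/(2i)`. -/
def opIm (X : E →L[ℂ] E) : E →L[ℂ] E := ((2 * Complex.I)⁻¹) • (X - star X)

lemma quadForm_eq_dotProduct {n : ℕ} (L₂ : Fin n → (E →L[ℂ] E))
    (S : Matrix (Fin n) (Fin n) (E →L[ℂ] E)) (L₁ : Fin n → (E →L[ℂ] E)) :
    quadForm L₂ S L₁ = star L₂ ⬝ᵥ (S *ᵥ L₁) := by
  simp only [quadForm, dotProduct, mulVec, Finset.mul_sum, mul_assoc, Pi.star_apply]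

lemma quadForm_add_left {n : ℕ} (A B : Fin n → (E →L[ℂ] E))
    (S : Matrix (Fin n) (Fin n) (E →L[ℂ] E)) (L : Fin n → (E →L[ℂ] E)) :
    quadForm (A + B) S L = quadForm A S L + quadForm B S L := by
  simp only [quadForm_eq_dotProduct, star_add, add_dotProduct]

lemma quadForm_add_right {n : ℕ} (L : Fin n → (E →L[ℂ] E))
    (S : Matrix (Fin n) (Fin n) (E →L[ℂ] E)) (A B : Fin n → (E →L[ℂ] E)) :
    quadForm L S (A + B) = quadForm L S A + quadForm L S B := by
  simp only [quadForm_eq_dotProduct, mulVec_add, dotProduct_add]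

lemma quadForm_mulVec_left {n : ℕ} (S T : Matrix (Fin n) (Fin n) (E →L[ℂ] E))
    (L₂ L₁ : Fin n → (E →L[ℂ] E)) :
    quadForm (S *ᵥ L₂) T L₁ = quadForm L₂ (Sᴴ * T) L₁ := by
  rw [quadForm_eq_dotProduct, quadForm_eq_dotProduct, star_mulVec, ← dotProduct_mulVec,
    mulVec_mulVec]

lemma quadForm_mulVec_right {n : ℕ} (L₂ : Fin n → (E →L[ℂ] E))
    (S T : Matrix (Fin n) (Fin n) (E →L[ℂ] E)) (L₁ : Fin n → (E →L[ℂ] E)) :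
    quadForm L₂ S (T *ᵥ L₁) = quadForm L₂ (S * T) L₁ := by
  rw [quadForm_eq_dotProduct, quadForm_eq_dotProduct, mulVec_mulVec]

lemma opIm_add (X Y : E →L[ℂ] E) : opIm (X + Y) = opIm X + opIm Y := by
  simp only [opIm, star_add, add_sub_add_comm, smul_add]

omit [CompleteSpace E] in
lemma seriesL_eq {n : ℕ} (S : Matrix (Fin n) (Fin n) (E →L[ℂ] E))
    (L₂ L₁ : Fin n → (E →L[ℂ] E)) : seriesL S L₂ L₁ = L₂ + S *ᵥ L₁ :=
  rfl

lemma seriesH_eq {n : ℕ} (S : Matrix (Fin n) (Fin n) (E →L[ℂ] E))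
    (L₂ L₁ : Fin n → (E →L[ℂ] E)) (H₁ H₂ : E →L[ℂ] E) :
    seriesH S L₂ L₁ H₁ H₂ = H₁ + H₂ + opIm (quadForm L₂ S L₁) :=
  rfl

omit [CompleteSpace E] in
lemma seriesS_assoc {n : ℕ} (S₁ S₂ S₃ : Matrix (Fin n) (Fin n) (E →L[ℂ] E)) :
    seriesS (seriesS S₃ S₂) S₁ = seriesS S₃ (seriesS S₂ S₁) :=
  Matrix.mul_assoc S₃ S₂ S₁

omit [CompleteSpace E] in
lemma seriesL_assoc {n : ℕ} (S₂ S₃ : Matrix (Fin n) (Fin n) (E →L[ℂ] E))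
    (L₁ L₂ L₃ : Fin n → (E →L[ℂ] E)) :
    seriesL (seriesS S₃ S₂) (seriesL S₃ L₃ L₂) L₁ = seriesL S₃ L₃ (seriesL S₂ L₂ L₁) := by
  simp only [seriesL_eq, seriesS, mulVec_add, mulVec_mulVec, add_assoc]

/-- Both sides equal `L₂†S₂L₁ + L₃†S₃L₂ + L₃†S₃S₂L₁`; on the left, the term `L₂†S₂L₁` arises as
`(S₃L₂)†(S₃S₂)L₁`, which is where the isometry `S₃†S₃ = I` enters. -/
lemma quadForm_add_quadForm_seriesL {n : ℕ} (S₂ S₃ : Matrix (Fin n) (Fin n) (E →L[ℂ] E))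
    (L₁ L₂ L₃ : Fin n → (E →L[ℂ] E)) (hS₃ : S₃ᴴ * S₃ = 1) :
    quadForm L₃ S₃ L₂ + quadForm (seriesL S₃ L₃ L₂) (seriesS S₃ S₂) L₁ =
      quadForm L₂ S₂ L₁ + quadForm L₃ S₃ (seriesL S₂ L₂ L₁) := by
  rw [seriesL_eq, seriesL_eq, seriesS, quadForm_add_left, quadForm_mulVec_left,
    ← Matrix.mul_assoc, hS₃, Matrix.one_mul, quadForm_add_right, quadForm_mulVec_right]
  abel

lemma seriesH_assoc {n : ℕ} (S₂ S₃ : Matrix (Fin n) (Fin n) (E →L[ℂ] E))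
    (L₁ L₂ L₃ : Fin n → (E →L[ℂ] E)) (H₁ H₂ H₃ : E →L[ℂ] E) (hS₃ : S₃ᴴ * S₃ = 1) :
    seriesH (seriesS S₃ S₂) (seriesL S₃ L₃ L₂) L₁ H₁ (seriesH S₃ L₃ L₂ H₂ H₃) =
      seriesH S₃ L₃ (seriesL S₂ L₂ L₁) (seriesH S₂ L₂ L₁ H₁ H₂) H₃ := by
  have hIm := congrArg opIm (quadForm_add_quadForm_seriesL S₂ S₃ L₁ L₂ L₃ hS₃)
  rw [opIm_add, opIm_add] at hIm
  simp only [seriesH_eq]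
  linear_combination (norm := abel) hIm

theorem series_assoc_general {n : ℕ}
    (S₁ S₂ S₃ : Matrix (Fin n) (Fin n) (E →L[ℂ] E)) (L₁ L₂ L₃ : Fin n → (E →L[ℂ] E))
    (H₁ H₂ H₃ : E →L[ℂ] E)
    (hS₃ : S₃ᴴ * S₃ = 1) :
    seriesS (seriesS S₃ S₂) S₁ = seriesS S₃ (seriesS S₂ S₁) ∧
    seriesL (seriesS S₃ S₂) (seriesL S₃ L₃ L₂) L₁ =
      seriesL S₃ L₃ (seriesL S₂ L₂ L₁) ∧
    seriesH (seriesS S₃ S₂) (seriesL S₃ L₃ L₂) L₁ H₁ (seriesH S₃ L₃ L₂ H₂ H₃) =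
      seriesH S₃ L₃ (seriesL S₂ L₂ L₁) (seriesH S₂ L₂ L₁ H₁ H₂) H₃ :=
  ⟨seriesS_assoc S₁ S₂ S₃, seriesL_assoc S₂ S₃ L₁ L₂ L₃, seriesH_assoc S₂ S₃ L₁ L₂ L₃ H₁ H₂ H₃ hS₃⟩

theorem series_assoc {n : ℕ}
    (S₁ S₂ S₃ : Matrix (Fin n) (Fin n) (E →L[ℂ] E)) (L₁ L₂ L₃ : Fin n → (E →L[ℂ] E))
    (H₁ H₂ H₃ : E →L[ℂ] E)
    (hS₃ : S₃ᴴ * S₃ = 1)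
    (hH₁ : IsSelfAdjoint H₁) (hH₂ : IsSelfAdjoint H₂) (hH₃ : IsSelfAdjoint H₃) :
    seriesS (seriesS S₃ S₂) S₁ = seriesS S₃ (seriesS S₂ S₁) ∧
    seriesL (seriesS S₃ S₂) (seriesL S₃ L₃ L₂) L₁ =
      seriesL S₃ L₃ (seriesL S₂ L₂ L₁) ∧
    seriesH (seriesS S₃ S₂) (seriesL S₃ L₃ L₂) L₁ H₁ (seriesH S₃ L₃ L₂ H₂ H₃) =
      seriesH S₃ L₃ (seriesL S₂ L₂ L₁) (seriesH S₂ L₂ L₁ H₁ H₂) H₃ :=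
  series_assoc_general S₁ S₂ S₃ L₁ L₂ L₃ H₁ H₂ H₃ hS₃
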